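/- arXiv:1501.01682 — 4 statements merged into one kernel-verified Lean document; each statement's English description precedes it below -/
import Mathlib

section
/- Let 0 ≤ β < 1 and define K(c) = ((1−β)²/48)·[(16β²−26β+5)c⁴ + 24(2−β)c² + 48] for c ∈ [0,2]. If β ∈ [0, (29−√137)/32] then max_{c∈[0,2]} K(c) = K(2) = (4/3)(1−β)²(4β²−8β+5); if β ∈ ((29−√137)/32, 1) then max_{c∈[0,2]} K(c) = (1−β)²(13β²−14β−7)/(16β²−26β+5). -/
/-- Maximization of `K(c) = ((1−β)²/48)[(16β²−26β+5)c⁴ + 24(2−β)c² + 48]` on `[0,2]`. -/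
theorem bistarlike_K_max
    (β : ℝ) (hβ0 : 0 ≤ β) (hβ1 : β < 1)
    (K : ℝ → ℝ)
    (hK : ∀ c, K c = ((1 - β) ^ 2 / 48) *
      ((16 * β ^ 2 - 26 * β + 5) * c ^ 4 + 24 * (2 - β) * c ^ 2 + 48)) :
    (β ≤ (29 - Real.sqrt 137) / 32 →
      K 2 = (4 / 3) * (1 - β) ^ 2 * (4 * β ^ 2 - 8 * β + 5) ∧
      IsGreatest (K '' Set.Icc 0 2)
        ((4 / 3) * (1 - β) ^ 2 * (4 * β ^ 2 - 8 * β + 5))) ∧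
    ((29 - Real.sqrt 137) / 32 < β →
      IsGreatest (K '' Set.Icc 0 2)
        ((1 - β) ^ 2 * ((13 * β ^ 2 - 14 * β - 7) / (16 * β ^ 2 - 26 * β + 5)))) := by
  have hs0 : (0:ℝ) ≤ Real.sqrt 137 := Real.sqrt_nonneg _
  have hs : Real.sqrt 137 ^ 2 = 137 := Real.sq_sqrt (by norm_num)
  have hs11 : 11 < Real.sqrt 137 := by nlinarith
  constructor
  · intro hβ
    have h11 : 0 ≤ 16*β^2 - 29*β + 11 := by nlinarith
    have hK2 : K 2 = (4 / 3) * (1 - β) ^ 2 * (4 * β ^ 2 - 8 * β + 5) := by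
      rw [hK]; ring
    refine ⟨hK2, ⟨⟨2, ⟨by norm_num, le_refl 2⟩, hK2⟩, ?_⟩⟩
    rintro y ⟨c, ⟨hc0, hc2⟩, rfl⟩
    rw [hK]
    have h4c : (0:ℝ) ≤ 4 - c^2 := by nlinarith
    rcases le_or_gt 0 (16*β^2 - 26*β + 5) with hq | hq
    · nlinarith [mul_nonneg (mul_nonneg (mul_nonneg (sq_nonneg (1-β)) h4c) hq)
          (by positivity : (0:ℝ) ≤ c^2 + 4),
        mul_nonneg (mul_nonneg (sq_nonneg (1-β)) h4c) (by linarith : (0:ℝ) ≤ 2 - β)]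
    · nlinarith [mul_nonneg (mul_nonneg (sq_nonneg (1-β)) h4c) h11,
        mul_nonneg (mul_nonneg (sq_nonneg (1-β)) (sq_nonneg (4 - c^2)))
          (by linarith : (0:ℝ) ≤ -(16*β^2 - 26*β + 5))]
  · intro hβ
    have hq : 16*β^2 - 26*β + 5 < 0 := by nlinarith
    have h11 : 16*β^2 - 29*β + 11 < 0 := by nlinarith
    have hq0 : (16*β^2 - 26*β + 5) ≠ 0 := ne_of_lt hq
    have hqn : (0:ℝ) < -(16*β^2 - 26*β + 5) := by linarith
    have ht0 : 0 ≤ 12*(2-β)/(-(16*β^2 - 26*β + 5)) :=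
      div_nonneg (by linarith) (le_of_lt hqn)
    have ht4 : 12*(2-β)/(-(16*β^2 - 26*β + 5)) ≤ 4 := by
      rw [div_le_iff₀ hqn]; nlinarith
    set c : ℝ := Real.sqrt (12*(2-β)/(-(16*β^2 - 26*β + 5))) with hcdef
    have hc2 : c^2 = 12*(2-β)/(-(16*β^2 - 26*β + 5)) := Real.sq_sqrt ht0
    have hc0 : 0 ≤ c := Real.sqrt_nonneg _
    have hcle : c ≤ 2 := by
      have h4 : Real.sqrt 4 = 2 := by
        rw [show (4:ℝ) = 2^2 by norm_num, Real.sqrt_sq (by norm_num : (0:ℝ) ≤ 2)]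
      calc c ≤ Real.sqrt 4 := Real.sqrt_le_sqrt ht4
        _ = 2 := h4
    have hc2' : (16*β^2 - 26*β + 5) * c^2 = -(12*(2-β)) := by
      rw [hc2, mul_comm, div_mul_eq_mul_div, div_eq_iff (ne_of_gt hqn)]; ring
    constructor
    · refine ⟨c, ⟨hc0, hcle⟩, ?_⟩
      rw [hK, ← mul_div_assoc, eq_div_iff hq0]
      linear_combination ((1-β)^2/48 * ((16*β^2-26*β+5)*c^2 + 12*(2-β))) * hc2'
    · rintro y ⟨d, ⟨hd0, hd2⟩, rfl⟩
      rw [hK, ← mul_div_assoc, le_div_iff_of_neg hq]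
      nlinarith [sq_nonneg ((1-β)*((16*β^2-26*β+5)*d^2 + 12*(2-β)))]
end

section
/- For β ∈ ((29−√137)/32, 1), the point c₀ = √(−12(2−β)/(16β²−26β+5)) lies in the open interval (0,2), and K(c₀) = (1−β)²(13β²−14β−7)/(16β²−26β+5), where K(c) = ((1−β)²/48)[(16β²−26β+5)c⁴ + 24(2−β)c² + 48]. -/
/-!
Write `A = 16β² − 26β + 5` and `x = c₀² = −12(2−β)/A`. Since `4A + 12(2−β) = 4(16β² − 29β + 11)`,
whose roots are `(29 ± √137)/32`, the bound `c₀ < 2` is exactly the lower bound on `β`; and `A < 0`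
follows because `A` lies below that quadratic. `K` is a biquadratic `a c⁴ + b c² + d` and `x` solves
`2 a x + b = 0`, so `K(c₀) = ((1−β)²/48)(48 − 144(2−β)²/A)`, and `A − 3(2−β)² = 13β² − 14β − 7`.
-/

open Real Set

lemma sixteen_sq_sub_twentynine_mul_add_eleven_neg {β : ℝ} (hβ0 : (29 - √137) / 32 < β) (hβ1 : β < 1) :
    16 * β ^ 2 - 29 * β + 11 < 0 := by
  have three_lt : (3 : ℝ) < √137 := lt_sqrt_of_sq_lt (by norm_num)
  have hsq : (32 * β - 29) ^ 2 < √137 ^ 2 := sq_lt_sq' (by linarith) (by linarith)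
  rw [sq_sqrt (by norm_num)] at hsq
  linarith

lemma sqrt_mem_Ioo_of_mem_Ioo_sq {x y : ℝ} (hx : x ∈ Ioo 0 (y ^ 2)) (hy : 0 < y) :
    √x ∈ Ioo 0 y :=
  ⟨sqrt_pos.mpr hx.1, (sqrt_lt' hy).mpr hx.2⟩

lemma biquadratic_sqrt_of_critical {a b d x : ℝ} (hx : 0 ≤ x)
    (hcrit : 2 * a * x + b = 0) :
    a * √x ^ 4 + b * √x ^ 2 + d = d - b ^ 2 / (4 * a) := by
  have hx2 : √x ^ 2 = x := sq_sqrt hx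
  have hx4 : √x ^ 4 = x ^ 2 := by rw [show 4 = 2 * 2 from rfl, pow_mul, hx2]
  have hb : b = -(2 * a * x) := by linarith
  rw [hx4, hx2, hb]
  field_simp
  ring

/-- For `(29−√137)/32 < β < 1`, the critical point `c₀` lies in `(0,2)` and the
value of `K` there is `(1−β)²(13β²−14β−7)/(16β²−26β+5)`. -/
theorem bistarlike_critical_point
    (β : ℝ) (hβ0 : (29 - Real.sqrt 137) / 32 < β) (hβ1 : β < 1)
    (K : ℝ → ℝ)
    (hK : ∀ c, K c = ((1 - β) ^ 2 / 48) *
      ((16 * β ^ 2 - 26 * β + 5) * c ^ 4 + 24 * (2 - β) * c ^ 2 + 48)) :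
    Real.sqrt (-12 * (2 - β) / (16 * β ^ 2 - 26 * β + 5)) ∈ Set.Ioo (0 : ℝ) 2 ∧
    K (Real.sqrt (-12 * (2 - β) / (16 * β ^ 2 - 26 * β + 5))) =
      (1 - β) ^ 2 * ((13 * β ^ 2 - 14 * β - 7) / (16 * β ^ 2 - 26 * β + 5)) := by
  have hQ := sixteen_sq_sub_twentynine_mul_add_eleven_neg hβ0 hβ1
  have hA : 16 * β ^ 2 - 26 * β + 5 < 0 := by linarith
  have hx : -12 * (2 - β) / (16 * β ^ 2 - 26 * β + 5) ∈ Ioo 0 (2 ^ 2) := by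
    refine ⟨div_pos_of_neg_of_neg (by linarith) hA, ?_⟩
    rw [div_lt_iff_of_neg hA]
    linarith
  refine ⟨sqrt_mem_Ioo_of_mem_Ioo_sq hx two_pos, ?_⟩
  have hcrit : 2 * (16 * β ^ 2 - 26 * β + 5) * (-12 * (2 - β) / (16 * β ^ 2 - 26 * β + 5)) +
      24 * (2 - β) = 0 := by
    rw [mul_assoc, mul_div_cancel₀ _ hA.ne]
    ring
  rw [hK, biquadratic_sqrt_of_critical hx.1.le hcrit,
    show 13 * β ^ 2 - 14 * β - 7 = (16 * β ^ 2 - 26 * β + 5) - 3 * (2 - β) ^ 2 by ring]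
  generalize 16 * β ^ 2 - 26 * β + 5 = a at hA ⊢
  field_simp [hA.ne]
  ring
end

section
/- Let 0 ≤ β < 1 and define Φ(c) = ((1−β)²/288)[(3β²−3β−4)c⁴ + 4(8−3β)c² + 32] for c ∈ [0,2]. Then max_{c∈[0,2]} Φ(c) = ((1−β)²/24)·(5β²+8β−32)/(3β²−3β−4), attained at c₀ = √(2(3β−8)/(3β²−3β−4)). -/
/-- Maximization of `Φ(c) = ((1−β)²/288)[(3β²−3β−4)c⁴ + 4(8−3β)c² + 32]` on `[0,2]`:
the maximum is `((1−β)²/24)(5β²+8β−32)/(3β²−3β−4)`, attained at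
`c₀ = √(2(3β−8)/(3β²−3β−4))`. -/
theorem biconvex_Phi_max
    (β : ℝ) (hβ0 : 0 ≤ β) (hβ1 : β < 1)
    (Φ : ℝ → ℝ)
    (hΦ : ∀ c, Φ c = ((1 - β) ^ 2 / 288) *
      ((3 * β ^ 2 - 3 * β - 4) * c ^ 4 + 4 * (8 - 3 * β) * c ^ 2 + 32)) :
    IsGreatest (Φ '' Set.Icc 0 2)
      (((1 - β) ^ 2 / 24) * ((5 * β ^ 2 + 8 * β - 32) / (3 * β ^ 2 - 3 * β - 4))) ∧
    Φ (Real.sqrt (2 * (3 * β - 8) / (3 * β ^ 2 - 3 * β - 4))) =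
      ((1 - β) ^ 2 / 24) * ((5 * β ^ 2 + 8 * β - 32) / (3 * β ^ 2 - 3 * β - 4)) := by
  have ha : 3 * β ^ 2 - 3 * β - 4 < 0 := by nlinarith
  have ha' : 3 * β ^ 2 - 3 * β - 4 ≠ 0 := ne_of_lt ha
  set a : ℝ := 3 * β ^ 2 - 3 * β - 4 with haeq
  set t₀ : ℝ := 2 * (3 * β - 8) / a with ht₀
  have ht₀pos : 0 < t₀ := div_pos_of_neg_of_neg (by nlinarith) ha
  have ht₀le : t₀ ≤ 4 := by
    rw [ht₀, div_le_iff_of_neg ha]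
    nlinarith
  set c₀ : ℝ := Real.sqrt t₀ with hc₀
  have hc₀sq : c₀ ^ 2 = t₀ := Real.sq_sqrt ht₀pos.le
  have hc₀mem : c₀ ∈ Set.Icc (0:ℝ) 2 := by
    constructor
    · exact Real.sqrt_nonneg _
    · calc c₀ ≤ Real.sqrt (2 ^ 2) := Real.sqrt_le_sqrt (by nlinarith)
        _ = 2 := Real.sqrt_sq (by norm_num)
  -- key identity
  have key : ∀ c : ℝ, Φ c =
      ((1 - β) ^ 2 / 24) * ((5 * β ^ 2 + 8 * β - 32) / a)
      + ((1 - β) ^ 2 / 288) * a * (c ^ 2 - t₀) ^ 2 := by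
    intro c
    rw [hΦ, ht₀]
    field_simp
    ring
  have hval : Φ c₀ = ((1 - β) ^ 2 / 24) * ((5 * β ^ 2 + 8 * β - 32) / a) := by
    rw [key c₀, hc₀sq]
    simp
  refine ⟨⟨⟨c₀, hc₀mem, hval⟩, ?_⟩, hval⟩
  rintro y ⟨c, _, rfl⟩
  rw [key c]
  have h1 : ((1 - β) ^ 2 / 288) * a * (c ^ 2 - t₀) ^ 2 ≤ 0 := by
    apply mul_nonpos_of_nonpos_of_nonneg
    · apply mul_nonpos_of_nonneg_of_nonpos (by positivity) ha.le
    · positivity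
  linarith
end

section
/- Let T₁,T₂,T₄ ≥ 0 and T₃ ≤ 0 be real numbers with T₃+2T₄ > 0 and T₂+2(T₃+T₄) ≥ 0, and define F(λ,μ) = T₁ + T₂(λ+μ) + T₃(λ²+μ²) + T₄(λ+μ)² on the square [0,1]×[0,1]. Then max F = F(1,1) = T₁ + 2T₂ + 2T₃ + 4T₄. -/
/-- Maximization of `F(λ,μ) = T₁ + T₂(λ+μ) + T₃(λ²+μ²) + T₄(λ+μ)²` on `[0,1]²`. -/
theorem quadratic_square_max
    (T₁ T₂ T₃ T₄ : ℝ)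
    (hT1 : 0 ≤ T₁) (hT2 : 0 ≤ T₂) (hT3 : T₃ ≤ 0) (hT4 : 0 ≤ T₄)
    (h34 : 0 < T₃ + 2 * T₄) (h234 : 0 ≤ T₂ + 2 * (T₃ + T₄))
    (F : ℝ → ℝ → ℝ)
    (hF : ∀ lam mu, F lam mu =
      T₁ + T₂ * (lam + mu) + T₃ * (lam ^ 2 + mu ^ 2) + T₄ * (lam + mu) ^ 2) :
    IsGreatest ((fun q : ℝ × ℝ => F q.1 q.2) ''
        (Set.Icc (0 : ℝ) 1 ×ˢ Set.Icc (0 : ℝ) 1))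
      (T₁ + 2 * T₂ + 2 * T₃ + 4 * T₄) ∧
    F 1 1 = T₁ + 2 * T₂ + 2 * T₃ + 4 * T₄ := by
  have hF11 : F 1 1 = T₁ + 2 * T₂ + 2 * T₃ + 4 * T₄ := by rw [hF]; ring
  refine ⟨⟨⟨(1, 1), ⟨⟨by norm_num, by norm_num⟩, ⟨by norm_num, by norm_num⟩⟩, hF11⟩, ?_⟩, hF11⟩
  rintro y ⟨⟨l, m⟩, ⟨⟨hl0, hl1⟩, hm0, hm1⟩, rfl⟩
  simp only [hF]
  nlinarith [mul_nonneg h234 (by linarith : (0:ℝ) ≤ 2 - (l + m)),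
    mul_nonneg (neg_nonneg.2 hT3) (sq_nonneg (1 - l)),
    mul_nonneg (neg_nonneg.2 hT3) (sq_nonneg (1 - m)),
    mul_nonneg hT4 (mul_nonneg (by linarith : (0:ℝ) ≤ l + m) (by linarith : (0:ℝ) ≤ 2 - (l + m)))]
end
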